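/- arXiv:2207.10786 — 3 statements merged into one kernel-verified Lean document; each statement's English description precedes it below -/
import Mathlib

section
/- Let λ > 0 and let V̄ = λI + ∑_{s=1}^t xₛxₛᵀ, W̄ = λI + ∑_{s=1}^t cₛ xₛxₛᵀ, and Z = ∑_{s=1}^t (1−cₛ) xₛxₛᵀ, where cₛ ∈ {0,1} and ‖xₛ‖₂ ≤ 1. Set G = ∑_{s=1}^t (1−cₛ). Then (G/λ)·V̄⁻¹ ⪰ V̄⁻¹ Z W̄⁻¹, i.e., the difference (G/λ)V̄⁻¹ − V̄⁻¹ Z W̄⁻¹ is positive semi-definite. -/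
/-!
Since `V̄ = W̄ + Z`, the resolvent identity gives `V̄⁻¹ Z W̄⁻¹ = W̄⁻¹ - V̄⁻¹`, so the claim reads
`W̄⁻¹ ⪯ ((G + λ) / λ) V̄⁻¹`. Inversion reverses the Loewner order, so it suffices that
`(λ / (G + λ)) V̄ ⪯ W̄`, i.e. `λ Z ⪯ G W̄`. This holds because `‖xₛ‖ ≤ 1` gives `Z ⪯ G I`,
while `λ I ⪯ W̄`.
-/

open Matrix

section

variable {n : Type*} [Fintype n]

lemma dotProduct_vecMulVec_self_mulVec (v y : n → ℝ) : y ⬝ᵥ vecMulVec v v *ᵥ y = (v ⬝ᵥ y) ^ 2 := by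
  simp only [vecMulVec_mulVec, op_smul_eq_smul, dotProduct_comm y, smul_dotProduct, smul_eq_mul, sq]

lemma dotProduct_sum_smul_vecMulVec_self_mulVec {ι : Type*} (s : Finset ι) (a : ι → ℝ)
    (x : ι → n → ℝ) (y : n → ℝ) :
    y ⬝ᵥ (∑ i ∈ s, a i • vecMulVec (x i) (x i)) *ᵥ y = ∑ i ∈ s, a i * (x i ⬝ᵥ y) ^ 2 := by
  rw [sum_mulVec, dotProduct_sum]
  simp only [smul_mulVec, dotProduct_smul, dotProduct_vecMulVec_self_mulVec, smul_eq_mul]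

lemma posSemidef_sum_smul_vecMulVec_self {ι : Type*} (s : Finset ι) {a : ι → ℝ}
    (ha : ∀ i ∈ s, 0 ≤ a i) (x : ι → n → ℝ) :
    (∑ i ∈ s, a i • vecMulVec (x i) (x i)).PosSemidef :=
  posSemidef_sum s fun i hi => (posSemidef_vecMulVec_self_star (x i)).smul (ha i hi)

lemma sq_dotProduct_le_dotProduct_self {v : n → ℝ} (hv : ∑ i, v i ^ 2 ≤ 1) (y : n → ℝ) :
    (v ⬝ᵥ y) ^ 2 ≤ y ⬝ᵥ y :=
  calc (v ⬝ᵥ y) ^ 2 ≤ (∑ i, v i ^ 2) * ∑ i, y i ^ 2 := Finset.sum_mul_sq_le_sq_mul_sq _ _ _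
    _ ≤ ∑ i, y i ^ 2 := mul_le_of_le_one_left (Finset.sum_nonneg fun i _ => sq_nonneg _) hv
    _ = y ⬝ᵥ y := by simp only [dotProduct, sq]

variable [DecidableEq n]

lemma dotProduct_inv_mulVec_le_of_le {A B : Matrix n n ℝ} (hA : IsUnit A) (hB : B.PosDef)
    (hBA : ∀ y, y ⬝ᵥ B *ᵥ y ≤ y ⬝ᵥ A *ᵥ y) (y : n → ℝ) :
    y ⬝ᵥ A⁻¹ *ᵥ y ≤ y ⬝ᵥ B⁻¹ *ᵥ y := by
  set z := A⁻¹ *ᵥ y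
  set w := B⁻¹ *ᵥ y
  have hAz : A *ᵥ z = y := by
    rw [mulVec_mulVec, mul_nonsing_inv _ ((isUnit_iff_isUnit_det A).1 hA), one_mulVec]
  have hBw : B *ᵥ w = y := by
    rw [mulVec_mulVec, mul_nonsing_inv _ ((isUnit_iff_isUnit_det B).1 hB.isUnit), one_mulVec]
  have hwB : w ᵥ* B = y := by
    rw [← mulVec_transpose, ← conjTranspose_eq_transpose_of_trivial, hB.isHermitian.eq, hBw]
  -- with `A z = B w = y`, expand `0 ≤ (z - w)ᵀ B (z - w)` and bound `zᵀ B z ≤ zᵀ A z = yᵀ z`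
  have hpsd := hB.posSemidef.dotProduct_mulVec_nonneg (z - w)
  have hzz := hBA z
  rw [star_trivial, mulVec_sub, dotProduct_sub, sub_dotProduct, sub_dotProduct, hBw,
    dotProduct_mulVec w, hwB] at hpsd
  rw [hAz] at hzz
  simp only [dotProduct_comm y] at *
  linarith

theorem dotProduct_inv_add_mul_mul_inv_mulVec_le {W Z : Matrix n n ℝ} {lam G : ℝ} (hlam : 0 < lam)
    (hG : 0 ≤ G) (hW : W.PosDef) (hZ : Z.PosSemidef)
    (hWlam : ∀ y, lam * (y ⬝ᵥ y) ≤ y ⬝ᵥ W *ᵥ y) (hZG : ∀ y, y ⬝ᵥ Z *ᵥ y ≤ G * (y ⬝ᵥ y))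
    (y : n → ℝ) :
    y ⬝ᵥ ((W + Z)⁻¹ * Z * W⁻¹) *ᵥ y ≤ G / lam * (y ⬝ᵥ (W + Z)⁻¹ *ᵥ y) := by
  set V := W + Z
  have hV : V.PosDef := hW.add_posSemidef hZ
  have hVinv : IsUnit V.det := (isUnit_iff_isUnit_det V).1 hV.isUnit
  have hresolvent : V⁻¹ * Z * W⁻¹ = W⁻¹ - V⁻¹ := by
    rw [← neg_sub, inv_sub_inv (iff_of_true hV.isUnit hW.isUnit), ← neg_sub V, mul_neg, neg_mul,
      neg_neg, add_sub_cancel_left]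
  have hk : 0 < lam / (G + lam) := by positivity
  have hVW : ∀ y, y ⬝ᵥ ((lam / (G + lam)) • V) *ᵥ y ≤ y ⬝ᵥ W *ᵥ y := by
    intro y
    rw [smul_mulVec, dotProduct_smul, smul_eq_mul, div_mul_eq_mul_div, div_le_iff₀ (by positivity),
      add_mulVec, dotProduct_add]
    nlinarith [hWlam y, hZG y]
  have hinv_le := dotProduct_inv_mulVec_le_of_le hW.isUnit (hV.smul hk) hVW y
  have hscaled_inv : ((lam / (G + lam)) • V)⁻¹ = (G / lam + 1) • V⁻¹ := by
    rw [show G / lam + 1 = (lam / (G + lam))⁻¹ by field_simp]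
    exact inv_smul' V (Units.mk0 _ hk.ne') hVinv
  rw [hscaled_inv, smul_mulVec, dotProduct_smul, smul_eq_mul] at hinv_le
  rw [hresolvent, sub_mulVec, dotProduct_sub]
  linarith

end

/-- With `V̄ = λI + ∑ xₛxₛᵀ`, `W̄ = λI + ∑ cₛ xₛxₛᵀ`,
`Z = ∑ (1−cₛ) xₛxₛᵀ`, `G = ∑ (1−cₛ)`, `cₛ ∈ {0,1}`, `‖xₛ‖₂ ≤ 1`, `λ > 0`:
`(G/λ)·V̄⁻¹ − V̄⁻¹ Z W̄⁻¹` is positive semi-definite in the quadratic-form sense. -/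
theorem stmt4 {d t : ℕ} (lam : ℝ) (hlam : 0 < lam)
    (x : Fin t → Fin d → ℝ) (hx : ∀ s, ∑ i, x s i ^ 2 ≤ 1)
    (c : Fin t → ℝ) (hc : ∀ s, c s = 0 ∨ c s = 1)
    (V W Z : Matrix (Fin d) (Fin d) ℝ)
    (hV : V = lam • (1 : Matrix (Fin d) (Fin d) ℝ) + ∑ s, vecMulVec (x s) (x s))
    (hW : W = lam • (1 : Matrix (Fin d) (Fin d) ℝ) + ∑ s, c s • vecMulVec (x s) (x s))
    (hZ : Z = ∑ s, (1 - c s) • vecMulVec (x s) (x s)) :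
    ∀ y : Fin d → ℝ,
      0 ≤ y ⬝ᵥ (((∑ s, (1 - c s)) / lam) • V⁻¹ - V⁻¹ * Z * W⁻¹) *ᵥ y := by
  have hc_nonneg (s : Fin t) : 0 ≤ c s := by rcases hc s with h | h <;> simp [h]
  have h1c_nonneg (s : Fin t) : 0 ≤ 1 - c s := by rcases hc s with h | h <;> simp [h]
  have hVWZ : V = W + Z := by
    rw [hV, hW, hZ, add_assoc, ← Finset.sum_add_distrib]
    simp only [← add_smul, add_sub_cancel, one_smul]
  have hWpd : W.PosDef := hW ▸ (PosDef.one.smul hlam).add_posSemidef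
    (posSemidef_sum_smul_vecMulVec_self _ (fun s _ => hc_nonneg s) x)
  have hZpsd : Z.PosSemidef := hZ ▸ posSemidef_sum_smul_vecMulVec_self _ (fun s _ => h1c_nonneg s) x
  have hW_ge (y : Fin d → ℝ) : lam * (y ⬝ᵥ y) ≤ y ⬝ᵥ W *ᵥ y := by
    rw [hW, add_mulVec, dotProduct_add, smul_mulVec, one_mulVec, dotProduct_smul, smul_eq_mul,
      dotProduct_sum_smul_vecMulVec_self_mulVec]
    exact le_add_of_nonneg_right (Finset.sum_nonneg fun s _ => by have := hc_nonneg s; positivity)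
  have hZ_le (y : Fin d → ℝ) : y ⬝ᵥ Z *ᵥ y ≤ (∑ s, (1 - c s)) * (y ⬝ᵥ y) := by
    rw [hZ, dotProduct_sum_smul_vecMulVec_self_mulVec, Finset.sum_mul]
    exact Finset.sum_le_sum fun s _ =>
      mul_le_mul_of_nonneg_left (sq_dotProduct_le_dotProduct_self (hx s) y) (h1c_nonneg s)
  intro y
  rw [sub_mulVec, dotProduct_sub, smul_mulVec, dotProduct_smul, smul_eq_mul, sub_nonneg, hVWZ]
  exact dotProduct_inv_add_mul_mul_inv_mulVec_le hlam (Finset.sum_nonneg fun s _ => h1c_nonneg s)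
    hWpd hZpsd hW_ge hZ_le y
end

section
/- Let (xₜ)_{t≥1} be vectors in ℝ^d with ‖xₜ‖₂ ≤ 1, let λ ≥ 1/2, and define V̄₀ = λI and V̄ₜ = V̄_{t−1} + xₜxₜᵀ. Then ∑_{t=1}^T xₜᵀ V̄_{t−1}⁻¹ xₜ ≤ 2 log(det(V̄_T)/det(V̄₀)). -/
/-!
Since `V t - λ • 1` is positive semidefinite, each term `sₜ = xₜᵀ (V t)⁻¹ xₜ` lies in
`[0, ‖xₜ‖² / λ] ⊆ [0, 2]`, where `u ≤ 2 log (1 + u)`. The matrix determinant lemma gives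
`det (V (t + 1)) = det (V t) * (1 + sₜ)`, so the sum of the `log (1 + sₜ)` telescopes to
`log (det (V T) / det (V 0))`.
-/

open Matrix

namespace Real

lemma le_two_mul_log_one_add {u : ℝ} (h0 : 0 ≤ u) (h2 : u ≤ 2) : u ≤ 2 * log (1 + u) :=
  calc u ≤ 2 * (2 * u / (u + 2)) := by
        rw [mul_div_assoc', le_div_iff₀ (by linarith)]; nlinarith
    _ ≤ 2 * log (1 + u) := by gcongr; exact le_log_one_add_of_nonneg h0

lemma sum_range_log_eq_log_div {f g : ℕ → ℝ} (hf : ∀ t, 0 < f t)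
    (hfg : ∀ t, f (t + 1) = f t * g t) (T : ℕ) :
    ∑ t ∈ Finset.range T, log (g t) = log (f T / f 0) := by
  have hg t : log (g t) = log (f (t + 1)) - log (f t) := by
    rw [← log_div (hf _).ne' (hf _).ne', hfg, mul_div_cancel_left₀ _ (hf t).ne']
  rw [Finset.sum_congr rfl fun t _ => hg t, Finset.sum_range_sub (fun t => log (f t)),
    log_div (hf _).ne' (hf _).ne']

end Real

namespace Matrix

variable {n : Type*}

lemma dotProduct_sq_le [Fintype n] (v w : n → ℝ) : (v ⬝ᵥ w) ^ 2 ≤ (v ⬝ᵥ v) * (w ⬝ᵥ w) := by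
  simpa only [dotProduct, sq] using Finset.sum_mul_sq_le_sq_mul_sq Finset.univ v w

variable [DecidableEq n]

lemma posDef_of_posSemidef_sub_smul_one {A : Matrix n n ℝ} {lam : ℝ} (hlam : 0 < lam)
    (hA : (A - lam • 1).PosSemidef) : A.PosDef := by
  simpa using (PosDef.one.smul hlam).add_posSemidef hA

variable [Fintype n]

theorem det_add_vecMulVec {α : Type*} [CommRing α] {A : Matrix n n α} (hA : IsUnit A.det)
    (u v : n → α) : (A + vecMulVec u v).det = A.det * (1 + v ⬝ᵥ A⁻¹ *ᵥ u) := by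
  rw [vecMulVec_eq Unit, det_add_replicateCol_mul_replicateRow hA, Matrix.mul_assoc,
    ← replicateCol_mulVec, det_unique (1 + _ : Matrix Unit Unit α), add_apply, one_apply_eq,
    replicateRow_mul_replicateCol_apply]

lemma mul_dotProduct_inv_mulVec_le {A : Matrix n n ℝ} {lam : ℝ} (hlam : 0 < lam)
    (hA : (A - lam • 1).PosSemidef) (x : n → ℝ) : lam * (x ⬝ᵥ A⁻¹ *ᵥ x) ≤ x ⬝ᵥ x := by
  have hAdef := posDef_of_posSemidef_sub_smul_one hlam hA
  set y := A⁻¹ *ᵥ x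
  have hx : A *ᵥ y = x := by
    rw [mulVec_mulVec, mul_nonsing_inv _ hAdef.det_pos.ne'.isUnit, one_mulVec]
  have hquad : x ⬝ᵥ y = y ⬝ᵥ A *ᵥ y := by rw [hx, dotProduct_comm]
  have hlow : lam * (y ⬝ᵥ y) ≤ x ⬝ᵥ y := by
    have := hA.dotProduct_mulVec_nonneg y
    simp only [star_trivial, sub_mulVec, smul_mulVec, one_mulVec, dotProduct_sub,
      dotProduct_smul, smul_eq_mul] at this
    linarith
  have hs : 0 ≤ x ⬝ᵥ y :=
    (mul_nonneg hlam.le (Finset.sum_nonneg fun i _ => mul_self_nonneg (y i))).trans hlow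
  have hxx : 0 ≤ x ⬝ᵥ x := Finset.sum_nonneg fun i _ => mul_self_nonneg (x i)
  have key : x ⬝ᵥ y * (lam * (x ⬝ᵥ y)) ≤ x ⬝ᵥ y * (x ⬝ᵥ x) :=
    calc x ⬝ᵥ y * (lam * (x ⬝ᵥ y)) = lam * (x ⬝ᵥ y) ^ 2 := by ring
      _ ≤ lam * ((x ⬝ᵥ x) * (y ⬝ᵥ y)) := by gcongr; exact dotProduct_sq_le x y
      _ = (x ⬝ᵥ x) * (lam * (y ⬝ᵥ y)) := by ring
      _ ≤ x ⬝ᵥ y * (x ⬝ᵥ x) := by rw [mul_comm (x ⬝ᵥ y)]; gcongr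
  rcases hs.eq_or_lt with h | h
  · rwa [← h, mul_zero]
  · exact le_of_mul_le_mul_left key h

lemma posSemidef_sub_smul_one_of_eq_add_vecMulVec {lam : ℝ} {x : ℕ → n → ℝ}
    {V : ℕ → Matrix n n ℝ} (hV0 : V 0 = lam • 1)
    (hVs : ∀ t, V (t + 1) = V t + vecMulVec (x t) (x t)) (t : ℕ) : (V t - lam • 1).PosSemidef := by
  induction t with
  | zero => simpa [hV0] using PosSemidef.zero
  | succ t ih =>
    rw [hVs, add_sub_right_comm]
    exact ih.add (by simpa using posSemidef_vecMulVec_self_star (x t))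

end Matrix

/-- elliptical potential lemma: with `V 0 = λ•I`, `λ ≥ 1/2`,
`V (t+1) = V t + xₜxₜᵀ`, and `‖xₜ‖₂ ≤ 1`,
`∑_{t<T} xₜᵀ (V t)⁻¹ xₜ ≤ 2 log (det (V T) / det (V 0))`. -/
theorem stmt6 {d : ℕ} (lam : ℝ) (hlam : 1 / 2 ≤ lam)
    (x : ℕ → Fin d → ℝ) (hx : ∀ t, ∑ i, x t i ^ 2 ≤ 1)
    (V : ℕ → Matrix (Fin d) (Fin d) ℝ)
    (hV0 : V 0 = lam • (1 : Matrix (Fin d) (Fin d) ℝ))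
    (hVs : ∀ t, V (t + 1) = V t + vecMulVec (x t) (x t)) (T : ℕ) :
    ∑ t ∈ Finset.range T, x t ⬝ᵥ (V t)⁻¹ *ᵥ x t
      ≤ 2 * Real.log ((V T).det / (V 0).det) := by
  have hlam0 : 0 < lam := by linarith
  have hgram := posSemidef_sub_smul_one_of_eq_add_vecMulVec hV0 hVs
  have hV t : (V t).PosDef := posDef_of_posSemidef_sub_smul_one hlam0 (hgram t)
  set s := fun t => x t ⬝ᵥ (V t)⁻¹ *ᵥ x t
  have hs_nonneg t : 0 ≤ s t := by
    simpa using (hV t).posSemidef.inv.dotProduct_mulVec_nonneg (x t)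
  have hs_le_two t : s t ≤ 2 := by
    have hxx : x t ⬝ᵥ x t ≤ 1 := by simpa only [dotProduct, sq] using hx t
    nlinarith [mul_dotProduct_inv_mulVec_le hlam0 (hgram t) (x t)]
  have hdet t : (V (t + 1)).det = (V t).det * (1 + s t) := by
    rw [hVs, det_add_vecMulVec (hV t).det_pos.ne'.isUnit]
  calc ∑ t ∈ Finset.range T, s t
      ≤ ∑ t ∈ Finset.range T, 2 * Real.log (1 + s t) :=
        Finset.sum_le_sum fun t _ => Real.le_two_mul_log_one_add (hs_nonneg t) (hs_le_two t)
    _ = 2 * Real.log ((V T).det / (V 0).det) := by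
        rw [← Finset.mul_sum, Real.sum_range_log_eq_log_div (fun t => (hV t).det_pos) hdet]
end

section
/- Let μ: ℝ → ℝ be differentiable with κ ≤ μ'(z) for all z in an interval containing ⟨x, θ₁⟩ and ⟨x, θ₂⟩, where κ > 0. Let x₁,…,xₜ ∈ ℝ^d, c₁,…,cₜ ∈ {0,1}, α > 0, a > 0, and define g(θ) = α·a·θ + ∑ₛ cₛ μ(⟨xₛ, θ⟩) xₛ and W̄ = (α·a/κ)·I + ∑ₛ cₛ xₛxₛᵀ. Then for all θ₁, θ₂ ∈ ℝ^d: κ·‖θ₁ − θ₂‖_{W̄} ≤ ‖g(θ₁) − g(θ₂)‖_{W̄⁻¹}, where ‖v‖_A = √(vᵀAv). -/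
open Matrix

/-! The map `g` is strongly monotone with respect to `W̄`:
`κ ‖θ₁ - θ₂‖²_{W̄} ≤ ⟪θ₁ - θ₂, g θ₁ - g θ₂⟫`. Indeed `μ' ≥ κ` makes each data term dominate
`κ cₛ ⟪xₛ, θ₁ - θ₂⟫²`, while the ridge term is exactly `κ · (α a / κ) ‖θ₁ - θ₂‖²`.
Cauchy–Schwarz for the dual pair of norms `‖·‖_{W̄}`, `‖·‖_{W̄⁻¹}` bounds the inner product by
`‖θ₁ - θ₂‖_{W̄} ‖g θ₁ - g θ₂‖_{W̄⁻¹}`, and cancelling `‖θ₁ - θ₂‖_{W̄}` gives the claim. -/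

theorem mul_sq_le_sub_mul_sub_of_le_deriv {f : ℝ → ℝ} {κ : ℝ} (hf : Differentiable ℝ f)
    (hκ : ∀ z, κ ≤ deriv f z) (p q : ℝ) :
    κ * (p - q) ^ 2 ≤ (f p - f q) * (p - q) := by
  have hmono : Monotone fun z => f z - κ * z := by
    refine monotone_of_deriv_nonneg (hf.sub (differentiable_id.const_mul κ)) fun z => ?_
    have hz : HasDerivAt (fun z => f z - κ * z) (deriv f z - κ * 1) z :=
      (hf z).hasDerivAt.sub ((hasDerivAt_id' z).const_mul κ)
    rw [hz.deriv, mul_one]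
    linarith [hκ z]
  have := (hmono.monovary monotone_id).sub_mul_sub_nonneg q p
  simp only [id] at this
  linarith

namespace Matrix

variable {n : Type*} [Fintype n] [DecidableEq n]

theorem PosSemidef.sq_dotProduct_mulVec_le {M : Matrix n n ℝ} (hM : M.PosSemidef) (v w : n → ℝ) :
    (v ⬝ᵥ M *ᵥ w) ^ 2 ≤ (v ⬝ᵥ M *ᵥ v) * (w ⬝ᵥ M *ᵥ w) := by
  have hsymm : w ⬝ᵥ M *ᵥ v = v ⬝ᵥ M *ᵥ w := by
    have hMt : Mᵀ = M := by simpa using hM.isHermitian.eq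
    rw [dotProduct_mulVec, ← mulVec_transpose, hMt, dotProduct_comm]
  have := (toBilin' M).apply_mul_apply_le_of_forall_zero_le
    (fun u => by simpa [toBilin'_apply'] using hM.dotProduct_mulVec_nonneg u) v w
  simp only [toBilin'_apply', hsymm] at this
  rwa [sq]

theorem PosDef.sq_dotProduct_le {W : Matrix n n ℝ} (hW : W.PosDef) (v u : n → ℝ) :
    (v ⬝ᵥ u) ^ 2 ≤ (v ⬝ᵥ W *ᵥ v) * (u ⬝ᵥ W⁻¹ *ᵥ u) := by
  have hWt : Wᵀ = W := by simpa using hW.isHermitian.eq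
  have hdual : ∀ z, (W *ᵥ v) ⬝ᵥ W⁻¹ *ᵥ z = v ⬝ᵥ z := fun z => by
    rw [dotProduct_mulVec, ← mulVec_transpose, transpose_nonsing_inv, hWt, mulVec_mulVec,
      nonsing_inv_mul W ((isUnit_iff_isUnit_det W).mp hW.isUnit), one_mulVec]
  simpa only [hdual] using hW.inv.posSemidef.sq_dotProduct_mulVec_le (W *ᵥ v) u

theorem PosDef.dotProduct_le_sqrt_mul_sqrt {W : Matrix n n ℝ} (hW : W.PosDef) (v u : n → ℝ) :
    v ⬝ᵥ u ≤ √(v ⬝ᵥ W *ᵥ v) * √(u ⬝ᵥ W⁻¹ *ᵥ u) := by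
  rw [← Real.sqrt_mul (by simpa using hW.posSemidef.dotProduct_mulVec_nonneg v)]
  exact Real.le_sqrt_of_sq_le (hW.sq_dotProduct_le v u)

theorem PosDef.mul_sqrt_le_sqrt_of_mul_le_dotProduct {W : Matrix n n ℝ} (hW : W.PosDef) {κ : ℝ}
    {v u : n → ℝ} (h : κ * (v ⬝ᵥ W *ᵥ v) ≤ v ⬝ᵥ u) :
    κ * √(v ⬝ᵥ W *ᵥ v) ≤ √(u ⬝ᵥ W⁻¹ *ᵥ u) := by
  have hA : 0 ≤ v ⬝ᵥ W *ᵥ v := by simpa using hW.posSemidef.dotProduct_mulVec_nonneg v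
  rcases (Real.sqrt_nonneg (v ⬝ᵥ W *ᵥ v)).eq_or_lt with h0 | hpos
  · rw [← h0, mul_zero]
    exact Real.sqrt_nonneg _
  · refine le_of_mul_le_mul_right ?_ hpos
    calc κ * √(v ⬝ᵥ W *ᵥ v) * √(v ⬝ᵥ W *ᵥ v) = κ * (v ⬝ᵥ W *ᵥ v) := by
          rw [mul_assoc, Real.mul_self_sqrt hA]
      _ ≤ v ⬝ᵥ u := h
      _ ≤ √(u ⬝ᵥ W⁻¹ *ᵥ u) * √(v ⬝ᵥ W *ᵥ v) := by
          rw [mul_comm]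
          exact hW.dotProduct_le_sqrt_mul_sqrt v u

end Matrix

section RegularizedGLM

variable {n ι : Type*} [Fintype n] [Fintype ι]

/-- `g` of the statement, with ridge parameter `r = α a` and link function `f`. -/
def regularizedScore (r : ℝ) (c : ι → ℝ) (x : ι → n → ℝ) (f : ℝ → ℝ) (θ : n → ℝ) : n → ℝ :=
  r • θ + ∑ s, (c s * f (x s ⬝ᵥ θ)) • x s

theorem sub_dotProduct_regularizedScore_sub (r : ℝ) (c : ι → ℝ) (x : ι → n → ℝ) (f : ℝ → ℝ)
    (θ₁ θ₂ : n → ℝ) :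
    (θ₁ - θ₂) ⬝ᵥ (regularizedScore r c x f θ₁ - regularizedScore r c x f θ₂)
      = r * ((θ₁ - θ₂) ⬝ᵥ (θ₁ - θ₂))
        + ∑ s, c s * ((f (x s ⬝ᵥ θ₁) - f (x s ⬝ᵥ θ₂)) * (x s ⬝ᵥ θ₁ - x s ⬝ᵥ θ₂)) := by
  have hx : ∀ s, (θ₁ - θ₂) ⬝ᵥ x s = x s ⬝ᵥ θ₁ - x s ⬝ᵥ θ₂ := fun s => by
    rw [dotProduct_comm, dotProduct_sub]
  simp only [regularizedScore, dotProduct_sub (θ₁ - θ₂), dotProduct_add, dotProduct_smul,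
    dotProduct_sum, smul_eq_mul, hx, add_sub_add_comm, ← mul_sub, ← Finset.sum_sub_distrib]
  exact congrArg₂ _ rfl (Finset.sum_congr rfl fun s _ => by ring)

variable [DecidableEq n]

/-- `W̄` of the statement, with ridge parameter `r = α a / κ` and design weights `c`. -/
def regularizedGram (r : ℝ) (c : ι → ℝ) (x : ι → n → ℝ) : Matrix n n ℝ :=
  r • 1 + ∑ s, c s • vecMulVec (x s) (x s)

theorem dotProduct_regularizedGram_mulVec_self (r : ℝ) (c : ι → ℝ) (x : ι → n → ℝ)
    (v : n → ℝ) :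
    v ⬝ᵥ regularizedGram r c x *ᵥ v = r * (v ⬝ᵥ v) + ∑ s, c s * (x s ⬝ᵥ v) ^ 2 := by
  simp only [regularizedGram, add_mulVec, smul_mulVec, one_mulVec, sum_mulVec, vecMulVec_mulVec,
    op_smul_eq_smul, smul_smul, dotProduct_add, dotProduct_smul, dotProduct_sum, smul_eq_mul]
  congr 1
  refine Finset.sum_congr rfl fun s _ => ?_
  rw [dotProduct_comm v (x s)]
  ring

theorem posDef_regularizedGram {r : ℝ} (hr : 0 < r) {c : ι → ℝ} (hc : ∀ s, 0 ≤ c s)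
    (x : ι → n → ℝ) : (regularizedGram r c x).PosDef :=
  (PosDef.one.smul hr).add_posSemidef <| posSemidef_sum _ fun s _ => by
    simpa using (posSemidef_vecMulVec_self_star (x s)).smul (hc s)

theorem mul_dotProduct_regularizedGram_le {f : ℝ → ℝ} {κ : ℝ} (hf : Differentiable ℝ f)
    (hfκ : ∀ z, κ ≤ deriv f z) (hκ : κ ≠ 0) (r : ℝ) {c : ι → ℝ} (hc : ∀ s, 0 ≤ c s)
    (x : ι → n → ℝ) (θ₁ θ₂ : n → ℝ) :
    κ * ((θ₁ - θ₂) ⬝ᵥ regularizedGram (r / κ) c x *ᵥ (θ₁ - θ₂))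
      ≤ (θ₁ - θ₂) ⬝ᵥ (regularizedScore r c x f θ₁ - regularizedScore r c x f θ₂) := by
  rw [sub_dotProduct_regularizedScore_sub, dotProduct_regularizedGram_mulVec_self, mul_add,
    Finset.mul_sum, ← mul_assoc, mul_div_cancel₀ r hκ]
  gcongr r * _ + ∑ s, ?_ with s
  rw [mul_left_comm, dotProduct_sub]
  exact mul_le_mul_of_nonneg_left (mul_sq_le_sub_mul_sub_of_le_deriv hf hfκ _ _) (hc s)

end RegularizedGLM

/-- For a differentiable link function `μ` with `μ' ≥ κ > 0`,
`g(θ) = α·a·θ + ∑ₛ cₛ μ(⟨xₛ,θ⟩) xₛ` and `W̄ = (α·a/κ)I + ∑ₛ cₛ xₛxₛᵀ`, we have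
`κ‖θ₁ − θ₂‖_{W̄} ≤ ‖g(θ₁) − g(θ₂)‖_{W̄⁻¹}`. -/
theorem stmt19 {d t : ℕ} (μ : ℝ → ℝ) (hdiff : Differentiable ℝ μ)
    (κ : ℝ) (hκ : 0 < κ) (hderiv : ∀ z : ℝ, κ ≤ deriv μ z)
    (x : Fin t → Fin d → ℝ) (c : Fin t → ℝ) (hc : ∀ s, c s = 0 ∨ c s = 1)
    (α a : ℝ) (hα : 0 < α) (ha : 0 < a)
    (g : (Fin d → ℝ) → (Fin d → ℝ))
    (hg : ∀ θ, g θ = (α * a) • θ + ∑ s, (c s * μ (x s ⬝ᵥ θ)) • x s)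
    (W : Matrix (Fin d) (Fin d) ℝ)
    (hW : W = (α * a / κ) • (1 : Matrix (Fin d) (Fin d) ℝ)
        + ∑ s, c s • vecMulVec (x s) (x s)) :
    ∀ θ₁ θ₂ : Fin d → ℝ,
      κ * Real.sqrt ((θ₁ - θ₂) ⬝ᵥ W *ᵥ (θ₁ - θ₂))
        ≤ Real.sqrt ((g θ₁ - g θ₂) ⬝ᵥ W⁻¹ *ᵥ (g θ₁ - g θ₂)) := by
  intro θ₁ θ₂
  have hc₀ : ∀ s, 0 ≤ c s := fun s => by rcases hc s with h | h <;> simp [h]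
  have hg' : g = regularizedScore (α * a) c x μ := funext hg
  have hW' : W = regularizedGram (α * a / κ) c x := hW
  have hWpd : W.PosDef := hW' ▸ posDef_regularizedGram (by positivity) hc₀ x
  refine hWpd.mul_sqrt_le_sqrt_of_mul_le_dotProduct ?_
  rw [hg', hW']
  exact mul_dotProduct_regularizedGram_le hdiff hderiv hκ.ne' (α * a) hc₀ x θ₁ θ₂
end
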